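/- arXiv:1503.09071 — 8 statements merged into one kernel-verified Lean document; each statement's English description precedes it below -/
import Mathlib

section
/- Let a < b be coprime positive integers. For any real t1, t2 there exist a real number x' and integers k1', k2' such that a·x' − (t1 + k1') = −(b·x' − (t2 + k2')) and max(|a·x' − (t1+k1')|, |b·x' − (t2+k2')|) = 1/(a+b) − μ_{a,b}(t1,t2). -/
/-- Distance from a real number to the nearest integer. -/
noncomputable def dni (u : ℝ) : ℝ := |u - round u|

/-- Approximation cost of `(t1, t2)` relative to the two-element set `{a, b}`. -/
noncomputable def mu2 (a b : ℕ) (t1 t2 : ℝ) : ℝ :=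
  ⨅ x : ℝ, max (dni (t1 - x * a)) (dni (t2 - x * b))

/-- Approximation cost of `(t1, t2, t3)` relative to the set `{a, b, n}`. -/
noncomputable def mu3 (a b n : ℕ) (t1 t2 t3 : ℝ) : ℝ :=
  ⨅ x : ℝ, max (dni (t1 - x * a)) (max (dni (t2 - x * b)) (dni (t3 - x * n)))

/-- Angular Kronecker constant of `{a, b, n}`. -/
noncomputable def alpha3 (a b n : ℕ) : ℝ :=
  sSup {v : ℝ | ∃ t1 t2 t3 : ℝ, v = mu3 a b n t1 t2 t3}

/-- Binary Kronecker constant of `{a, b, n}`. -/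
noncomputable def beta3 (a b n : ℕ) : ℝ :=
  sSup {v : ℝ | ∃ t1 t2 t3 : ℝ, t1 ∈ ({0, 1/2} : Set ℝ) ∧ t2 ∈ ({0, 1/2} : Set ℝ) ∧
    t3 ∈ ({0, 1/2} : Set ℝ) ∧ v = mu3 a b n t1 t2 t3}

/-!
Writing `c = a t₂ - b t₁`, the residuals `e₁ = a x - t₁ - k₁`, `e₂ = b x - t₂ - k₂` always
satisfy `b e₁ - a e₂ ≡ c (mod 1)`, and by coprimality every pair with this property occurs.
Since `a e₂ - b e₁` is then at least `dni c` in absolute value while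
`|a e₂ - b e₁| ≤ (a + b) max(|e₁|, |e₂|)`, one gets `μ = dni c / (a + b)`, attained with
`e₂ = -e₁`. Replacing the nearest integer to `c` by the nearest one on the other side of `c`
gives the same kind of residuals with `|e₁| = (1 - dni c) / (a + b)`.
-/

lemma Nat.Coprime.add_pos {a b : ℕ} (hcop : Nat.Coprime a b) : 0 < a + b := by
  rcases Nat.eq_zero_or_pos a with rfl | ha
  · rw [Nat.coprime_zero_left] at hcop
    omega
  · omega

lemma IsCoprime.exists_mul_sub_add_intCast_eq {a b : ℤ} (hab : IsCoprime a b)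
    {t₁ t₂ e₁ e₂ : ℝ} (m : ℤ) (h : b * e₁ - a * e₂ = a * t₂ - b * t₁ - m) :
    ∃ (x : ℝ) (k₁ k₂ : ℤ), a * x - (t₁ + k₁) = e₁ ∧ b * x - (t₂ + k₂) = e₂ := by
  obtain ⟨p, q, hpq⟩ := hab
  have hpqR : (p : ℝ) * a + q * b = 1 := by exact_mod_cast hpq
  set T₁ : ℝ := t₁ + (m * q : ℤ) + e₁
  set T₂ : ℝ := t₂ + (-m * p : ℤ) + e₂
  have hT : (a : ℝ) * T₂ = b * T₁ := by
    simp only [T₁, T₂]; push_cast; linear_combination (-(m : ℝ)) * hpqR - h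
  refine ⟨p * T₁ + q * T₂, m * q, -m * p, ?_, ?_⟩
  · linear_combination T₁ * hpqR + (q : ℝ) * hT
  · linear_combination T₂ * hpqR - (p : ℝ) * hT

lemma Nat.Coprime.exists_mul_sub_add_intCast_eq_div {a b : ℕ} (hcop : Nat.Coprime a b)
    (t₁ t₂ : ℝ) (n : ℤ) :
    ∃ (x : ℝ) (k₁ k₂ : ℤ), a * x - (t₁ + k₁) = (a * t₂ - b * t₁ - n) / (a + b) ∧
      b * x - (t₂ + k₂) = -((a * t₂ - b * t₁ - n) / (a + b)) := by
  have habR : (a : ℝ) + b ≠ 0 := by exact_mod_cast hcop.add_pos.ne'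
  simpa only [Int.cast_natCast] using
    (Nat.isCoprime_iff_coprime.2 hcop).exists_mul_sub_add_intCast_eq (t₁ := t₁) (t₂ := t₂) n
      (by simp only [Int.cast_natCast]; field_simp; ring)

lemma dni_natCast_mul_sub_le (a b : ℕ) (u v : ℝ) :
    dni (a * v - b * u) ≤ a * dni v + b * dni u := calc
  dni (a * v - b * u) ≤ |a * v - b * u - ((a * round v - b * round u : ℤ) : ℝ)| :=
    round_le _ _
  _ = |a * (v - round v) - b * (u - round u)| := by push_cast; ring_nf
  _ ≤ |a * (v - round v)| + |b * (u - round u)| := abs_sub _ _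
  _ = a * dni v + b * dni u := by simp only [abs_mul, Nat.abs_cast, dni]

lemma dni_div_le_mu2 {a b : ℕ} (hab : 0 < a + b) (t₁ t₂ : ℝ) :
    dni (a * t₂ - b * t₁) / (a + b) ≤ mu2 a b t₁ t₂ := by
  have habR : (0 : ℝ) < a + b := by exact_mod_cast hab
  refine le_ciInf fun x => (div_le_iff₀ habR).2 ?_
  have hc : (a : ℝ) * t₂ - b * t₁ = a * (t₂ - x * b) - b * (t₁ - x * a) := by ring
  rw [hc]
  refine (dni_natCast_mul_sub_le a b _ _).trans ?_
  nlinarith [le_max_left (dni (t₁ - x * a)) (dni (t₂ - x * b)),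
    le_max_right (dni (t₁ - x * a)) (dni (t₂ - x * b)), Nat.cast_nonneg (α := ℝ) a,
    Nat.cast_nonneg (α := ℝ) b]

lemma mu2_le_dni_div {a b : ℕ} (hcop : Nat.Coprime a b) (t₁ t₂ : ℝ) :
    mu2 a b t₁ t₂ ≤ dni (a * t₂ - b * t₁) / (a + b) := by
  have habR : (0 : ℝ) < a + b := by exact_mod_cast hcop.add_pos
  set c : ℝ := a * t₂ - b * t₁
  obtain ⟨x, k₁, k₂, h₁, h₂⟩ := hcop.exists_mul_sub_add_intCast_eq_div t₁ t₂ (round c)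
  calc mu2 a b t₁ t₂ ≤ max (dni (t₁ - x * a)) (dni (t₂ - x * b)) :=
        ciInf_le ⟨0, by rintro _ ⟨y, rfl⟩; exact le_max_of_le_left (abs_nonneg _)⟩ x
    _ ≤ max |t₁ - x * a - (-k₁ : ℤ)| |t₂ - x * b - (-k₂ : ℤ)| :=
        max_le_max (round_le _ _) (round_le _ _)
    _ = dni c / (a + b) := by
        push_cast
        rw [show t₁ - x * a - -k₁ = -((c - round c) / (a + b)) by linarith,
          show t₂ - x * b - -k₂ = (c - round c) / (a + b) by linarith,
          abs_neg, max_self, abs_div, abs_of_pos habR]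
        rfl

lemma mu2_eq_dni_div {a b : ℕ} (hcop : Nat.Coprime a b) (t₁ t₂ : ℝ) :
    mu2 a b t₁ t₂ = dni (a * t₂ - b * t₁) / (a + b) :=
  le_antisymm (mu2_le_dni_div hcop t₁ t₂) (dni_div_le_mu2 hcop.add_pos t₁ t₂)

lemma exists_abs_sub_intCast_eq_one_sub_dni (c : ℝ) : ∃ n : ℤ, |c - n| = 1 - dni c := by
  obtain ⟨hlo, hhi⟩ := abs_le.1 (abs_sub_round c)
  rcases le_or_gt 0 (c - round c) with h | h
  · refine ⟨round c + 1, ?_⟩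
    rw [dni, abs_of_nonneg h, Int.cast_add, Int.cast_one, abs_of_nonpos (by linarith)]
    ring
  · refine ⟨round c - 1, ?_⟩
    rw [dni, abs_of_neg h, Int.cast_sub, Int.cast_one, abs_of_nonneg (by linarith)]
    ring

theorem stmt_2_general (a b : ℕ) (hcop : Nat.Coprime a b)
    (t1 t2 : ℝ) :
    ∃ (x' : ℝ) (k1' k2' : ℤ),
      a * x' - (t1 + k1') = -(b * x' - (t2 + k2')) ∧
      max |a * x' - (t1 + k1')| |b * x' - (t2 + k2')| =
        1 / (a + b) - mu2 a b t1 t2 := by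
  have habR : (0 : ℝ) < a + b := by exact_mod_cast hcop.add_pos
  set c : ℝ := a * t2 - b * t1
  obtain ⟨n, hn⟩ := exists_abs_sub_intCast_eq_one_sub_dni c
  obtain ⟨x, k₁, k₂, h₁, h₂⟩ := hcop.exists_mul_sub_add_intCast_eq_div t1 t2 n
  refine ⟨x, k₁, k₂, by rw [h₁, h₂, neg_neg], ?_⟩
  rw [h₁, h₂, abs_neg, max_self, abs_div, hn, abs_of_pos habR, mu2_eq_dni_div hcop]
  ring

theorem stmt_2 (a b : ℕ) (ha : 0 < a) (hab : a < b) (hcop : Nat.Coprime a b)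
    (t1 t2 : ℝ) :
    ∃ (x' : ℝ) (k1' k2' : ℤ),
      a * x' - (t1 + k1') = -(b * x' - (t2 + k2')) ∧
      max |a * x' - (t1 + k1')| |b * x' - (t2 + k2')| =
        1 / (a + b) - mu2 a b t1 t2 :=
  stmt_2_general a b hcop t1 t2
end

section
/- Let a < b be coprime positive integers and t1, t2 real. Suppose real numbers x, y and integers j1, j2, k1, k2 satisfy a·x − t1 − j1 = a·y − t1 − k1 = −(b·x − t2 − j2) = −(b·y − t2 − k2). Then there is an integer s with y = x + s, k1 = j1 + a·s and k2 = j2 + b·s. -/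
theorem stmt_3 (a b : ℕ) (ha : 0 < a) (hab : a < b) (hcop : Nat.Coprime a b)
    (t1 t2 x y : ℝ) (j1 j2 k1 k2 : ℤ)
    (h1 : a * x - t1 - j1 = a * y - t1 - k1)
    (h2 : a * y - t1 - k1 = -(b * x - t2 - j2))
    (h3 : -(b * x - t2 - j2) = -(b * y - t2 - k2)) :
    ∃ s : ℤ, y = x + s ∧ k1 = j1 + a * s ∧ k2 = j2 + b * s  := by
  have ha' : (a:ℝ) ≠ 0 := by exact_mod_cast ha.ne'
  have hb : 0 < b := ha.trans hab
  have hA : (a:ℝ) * (y - x) = ((k1 - j1 : ℤ) : ℝ) := by push_cast; linarith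
  have hB : (b:ℝ) * (y - x) = ((k2 - j2 : ℤ) : ℝ) := by push_cast; linarith
  have key : (b:ℤ) * (k1 - j1) = (a:ℤ) * (k2 - j2) := by
    have : ((b:ℤ) * (k1 - j1) : ℝ) = ((a:ℤ) * (k2 - j2) : ℝ) := by
      push_cast
      push_cast at hA hB
      nlinarith [hA, hB]
    exact_mod_cast this
  have hdvd : (a:ℤ) ∣ (k1 - j1) := by
    have : (a:ℤ) ∣ (b:ℤ) * (k1 - j1) := ⟨k2 - j2, key⟩
    exact (IsCoprime.dvd_of_dvd_mul_left
      (Int.isCoprime_iff_gcd_eq_one.mpr (by exact_mod_cast hcop)) this)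
  obtain ⟨s, hs⟩ := hdvd
  refine ⟨s, ?_, ?_, ?_⟩
  · have : (a:ℝ) * (y - x) = (a:ℝ) * s := by
      rw [hA]; push_cast [hs]; ring
    have := mul_left_cancel₀ ha' this
    linarith
  · omega
  · have hb' : (b:ℤ) ≠ 0 := by exact_mod_cast hb.ne'
    have : (a:ℤ) * ((b:ℤ) * (k2 - j2)) = (a:ℤ) * ((b:ℤ) * ((b:ℤ) * s)) := by
      rw [show (a:ℤ) * ((b:ℤ) * (k2 - j2)) = (b:ℤ) * ((a:ℤ) * (k2 - j2)) by ring, ← key, hs]; ring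
    have ha'' : (a:ℤ) ≠ 0 := by exact_mod_cast ha.ne'
    have := mul_left_cancel₀ ha'' this
    have := mul_left_cancel₀ hb' this
    omega
end

section
/- Let a < b < n be positive integers, t1, t2, t3 real, and suppose x, k1, k2 satisfy a·x − (t1+k1) = −(b·x − (t2+k2)) with λ_x := |a·x − (t1+k1)| ≤ (b−a)/(2n). Then μ_{a,b,n}(t1,t2,t3) ≤ (3b−a)/(2n). -/
/-! Move `x` to the nearest `y` at which `n * y ≡ t3 (mod 1)`. This costs `|y - x| ≤ 1 / (2n)`, so
the first two coordinates, which are within `λ_x` of an integer at `x`, stay within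
`λ_x + a / (2n)` and `λ_x + b / (2n)` of one, while the third becomes exact. -/

lemma dni_le_abs_sub_intCast (u : ℝ) (m : ℤ) : dni u ≤ |u - m| := round_le u m

lemma dni_intCast (m : ℤ) : dni m = 0 := by simp [dni]

lemma dni_add_le (u v : ℝ) : dni (u + v) ≤ dni u + |v| :=
  calc dni (u + v) ≤ |u + v - round u| := dni_le_abs_sub_intCast _ _
    _ = |(u - round u) + v| := by ring_nf
    _ ≤ dni u + |v| := abs_add_le _ _

lemma dni_sub_mul_le (t x y c : ℝ) (hc : 0 ≤ c) :
    dni (t - y * c) ≤ dni (t - x * c) + c * |y - x| := by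
  calc dni (t - y * c) = dni (t - x * c + -((y - x) * c)) := by ring_nf
    _ ≤ dni (t - x * c) + |-((y - x) * c)| := dni_add_le _ _
    _ = dni (t - x * c) + c * |y - x| := by rw [abs_neg, abs_mul, abs_of_nonneg hc, mul_comm c]

lemma dni_sub_mul_le_abs (t x c : ℝ) (k : ℤ) : dni (t - x * c) ≤ |c * x - (t + k)| := by
  calc dni (t - x * c) ≤ |t - x * c - ((-k : ℤ) : ℝ)| := dni_le_abs_sub_intCast _ _
    _ = |c * x - (t + k)| := by rw [← abs_neg]; push_cast; ring_nf

lemma exists_dni_sub_mul_eq_zero (t x : ℝ) {c : ℝ} (hc : 0 < c) :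
    ∃ y, dni (t - y * c) = 0 ∧ |y - x| ≤ 1 / (2 * c) := by
  set m := round (t - x * c)
  refine ⟨(t - m) / c, ?_, ?_⟩
  · rw [div_mul_cancel₀ _ hc.ne', sub_sub_cancel, dni_intCast]
  · have hyx : (t - m) / c - x = (t - x * c - m) / c := by field_simp; ring
    rw [hyx, abs_div, abs_of_pos hc, div_le_div_iff₀ hc (by positivity)]
    nlinarith [abs_sub_round (t - x * c)]

lemma mu3_le (a b n : ℕ) (t1 t2 t3 y : ℝ) :
    mu3 a b n t1 t2 t3 ≤ max (dni (t1 - y * a)) (max (dni (t2 - y * b)) (dni (t3 - y * n))) :=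
  ciInf_le ⟨0, by rintro v ⟨z, rfl⟩; exact (abs_nonneg _).trans (le_max_left _ _)⟩ y

theorem stmt_4_general (a b n : ℕ) (hab : a < b) (hbn : b < n)
    (t1 t2 t3 : ℝ) (x : ℝ) (k1 k2 : ℤ)
    (hbal : a * x - (t1 + k1) = -(b * x - (t2 + k2)))
    (hsmall : |a * x - (t1 + k1)| ≤ ((b : ℝ) - a) / (2 * n)) :
    mu3 a b n t1 t2 t3 ≤ (3 * (b : ℝ) - a) / (2 * n) := by
  have hn : (0 : ℝ) < n := by exact_mod_cast (Nat.zero_le b).trans_lt hbn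
  have hab' : (a : ℝ) < b := by exact_mod_cast hab
  have h1 : dni (t1 - x * a) ≤ ((b : ℝ) - a) / (2 * n) :=
    (dni_sub_mul_le_abs t1 x a k1).trans hsmall
  have h2 : dni (t2 - x * b) ≤ ((b : ℝ) - a) / (2 * n) := by
    rw [hbal, abs_neg] at hsmall
    exact (dni_sub_mul_le_abs t2 x b k2).trans hsmall
  obtain ⟨y, hy3, hyx⟩ := exists_dni_sub_mul_eq_zero t3 x hn
  refine (mu3_le a b n t1 t2 t3 y).trans (max_le ?_ (max_le ?_ ?_))
  · calc dni (t1 - y * a) ≤ dni (t1 - x * a) + a * |y - x| := dni_sub_mul_le _ _ _ _ (by positivity)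
      _ ≤ ((b : ℝ) - a) / (2 * n) + a * (1 / (2 * n)) := by gcongr
      _ ≤ (3 * (b : ℝ) - a) / (2 * n) := by rw [mul_one_div, ← add_div]; gcongr; linarith
  · calc dni (t2 - y * b) ≤ dni (t2 - x * b) + b * |y - x| := dni_sub_mul_le _ _ _ _ (by positivity)
      _ ≤ ((b : ℝ) - a) / (2 * n) + b * (1 / (2 * n)) := by gcongr
      _ ≤ (3 * (b : ℝ) - a) / (2 * n) := by rw [mul_one_div, ← add_div]; gcongr; linarith
  · rw [hy3]; exact div_nonneg (by linarith) (by positivity)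

theorem stmt_4 (a b n : ℕ) (ha : 0 < a) (hab : a < b) (hbn : b < n)
    (t1 t2 t3 : ℝ) (x : ℝ) (k1 k2 : ℤ)
    (hbal : a * x - (t1 + k1) = -(b * x - (t2 + k2)))
    (hsmall : |a * x - (t1 + k1)| ≤ ((b : ℝ) - a) / (2 * n)) :
    mu3 a b n t1 t2 t3 ≤ (3 * (b : ℝ) - a) / (2 * n) :=
  stmt_4_general a b n hab hbn t1 t2 t3 x k1 k2 hbal hsmall
end

section
/- Let a < b < n be positive integers, t1, t2, t3 real, and suppose x ∈ ℝ and integers k1, k2 satisfy a·x − (t1+k1) = λ_x = −(b·x − (t2+k2)) with λ_x > (b−a)/(2n). Let E ≥ λ_x and set z1 = x + (n·λ_x − (b+n)·E)/(b·n), z2 = x + ((a+n)·E − n·λ_x)/(a·n). If there exists z ∈ [z1, z2] with n·z ≡ t3 (mod 1), then μ_{a,b,n}(t1,t2,t3) ≤ E. -/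
/-!
For a candidate point `y`, the first two coordinates of `μ` are at most `E` as soon as
`(λ - E)/b ≤ y - x ≤ min ((E - λ)/a) ((λ + E)/b)`, i.e. `y` lies in a window `[A, B]` that is
nonempty because `E ≥ λ > 0`. The third coordinate is at most `E` as soon as `y` lies within
`E/n` of the lattice `z + ℤ/n`, so it suffices that `[A - E/n, B + E/n]` meets this lattice.
If the bound `(E - λ)/a` is the binding one, the hypothesis on `z` says exactly that `z` lies in
this interval. Otherwise `(b - a) E > (a + b) λ`, which together with `2nλ > b - a` gives
`2nE > a + b`, so the interval has length `2E/b + 2E/n > 1/n` and meets every coset of `ℤ/n`.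
-/

open Set

lemma dni_le_of_abs_sub_int_le {u E : ℝ} (m : ℤ) (h : |u - m| ≤ E) : dni u ≤ E :=
  (round_le u m).trans h

lemma mu3_le_of_dni_le {a b n : ℕ} {t1 t2 t3 E : ℝ} (y : ℝ) (h1 : dni (t1 - y * a) ≤ E)
    (h2 : dni (t2 - y * b) ≤ E) (h3 : dni (t3 - y * n) ≤ E) : mu3 a b n t1 t2 t3 ≤ E := by
  have hbdd : BddBelow (range fun y : ℝ =>
      max (dni (t1 - y * a)) (max (dni (t2 - y * b)) (dni (t3 - y * n)))) :=
    ⟨0, by rintro _ ⟨y, rfl⟩; exact le_max_of_le_left (abs_nonneg _)⟩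
  exact (ciInf_le hbdd y).trans (max_le h1 (max_le h2 h3))

lemma exists_sub_int_div_mem_Icc {n L R : ℝ} (hn : 0 < n) (h : 1 ≤ n * (R - L)) (y : ℝ) :
    ∃ k : ℤ, y - k / n ∈ Icc L R := by
  refine ⟨⌊n * (y - L)⌋, ?_, ?_⟩
  · have := Int.floor_le (n * (y - L))
    rw [le_sub_iff_add_le, ← le_sub_iff_add_le', div_le_iff₀ hn]
    linarith
  · have := Int.lt_floor_add_one (n * (y - L))
    rw [sub_le_iff_le_add, ← sub_le_iff_le_add', le_div_iff₀ hn]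
    linarith

lemma exists_mem_Icc_abs_sub_le {A B p r : ℝ} (hAB : A ≤ B) (hr : 0 ≤ r)
    (hp : p ∈ Icc (A - r) (B + r)) : ∃ y ∈ Icc A B, |p - y| ≤ r := by
  refine ⟨max A (min p B), ⟨le_max_left _ _, max_le hAB (min_le_right _ _)⟩, abs_le.2 ⟨?_, ?_⟩⟩ <;>
  · simp only [max_def, min_def]
    split_ifs <;> linarith [hp.1, hp.2]

section Window

variable {a b n lam E x y z : ℝ}

lemma window_left_le_right (ha : 0 < a) (hb : 0 < b) (hlam : 0 ≤ lam) (hE : lam ≤ E) :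
    x + (lam - E) / b ≤ min (x + (E - lam) / a) (x + (lam + E) / b) := by
  refine le_min ?_ (by gcongr; linarith)
  linarith [div_nonpos_of_nonpos_of_nonneg (sub_nonpos.2 hE) hb.le,
    div_nonneg (sub_nonneg.2 hE) ha.le]

lemma abs_le_of_mem_window (ha : 0 < a) (hab : a ≤ b) (hlam : 0 ≤ lam)
    (hy : y ∈ Icc (x + (lam - E) / b) (min (x + (E - lam) / a) (x + (lam + E) / b))) :
    |a * (y - x) + lam| ≤ E ∧ |b * (y - x) - lam| ≤ E := by
  have hb : 0 < b := ha.trans_le hab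
  obtain ⟨hyA, hyB, hyC⟩ := And.imp_right le_min_iff.1 hy
  have hb1 : lam - E ≤ b * (y - x) := (div_le_iff₀' hb).1 (by linarith)
  have hb2 : b * (y - x) ≤ lam + E := (le_div_iff₀' hb).1 (by linarith)
  have ha1 : a * (y - x) ≤ E - lam := (le_div_iff₀' ha).1 (by linarith)
  refine ⟨abs_le.2 ⟨?_, by linarith⟩, abs_le.2 ⟨by linarith, by linarith⟩⟩
  rcases le_total 0 (y - x) with hu | hu
  · nlinarith
  · nlinarith

lemma exists_sub_int_div_mem_window (ha : 0 < a) (hab : a < b)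
    (hn : 0 < n) (hbig : b - a < 2 * n * lam) (hlam : 0 < lam) (hE : lam ≤ E)
    (hz1 : x + (lam - E) / b - E / n ≤ z) (hz2 : z ≤ x + (E - lam) / a + E / n) :
    ∃ k : ℤ, z - k / n ∈
      Icc (x + (lam - E) / b - E / n) (min (x + (E - lam) / a) (x + (lam + E) / b) + E / n) := by
  have hb : 0 < b := ha.trans hab
  rcases le_total (x + (E - lam) / a) (x + (lam + E) / b) with h | h
  · exact ⟨0, by simpa [min_eq_left h] using And.intro hz1 hz2⟩
  rw [min_eq_right h]
  apply exists_sub_int_div_mem_Icc hn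
  have hwin : (a + b) * lam ≤ (b - a) * E := by
    rw [add_le_add_iff_left, div_le_div_iff₀ hb ha] at h
    linarith
  have hnE : a + b < 2 * n * E := by nlinarith
  rw [show n * (x + (lam + E) / b + E / n - (x + (lam - E) / b - E / n)) =
      (2 * n * E + 2 * b * E) / b by field_simp; ring, le_div_iff₀ hb]
  nlinarith

end Window

theorem stmt_5 (a b n : ℕ) (ha : 0 < a) (hab : a < b) (hbn : b < n)
    (t1 t2 t3 : ℝ) (x lam : ℝ) (k1 k2 : ℤ)
    (hbal1 : a * x - (t1 + k1) = lam) (hbal2 : lam = -(b * x - (t2 + k2)))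
    (hbig : lam > ((b : ℝ) - a) / (2 * n))
    (E : ℝ) (hE : E ≥ lam)
    (z : ℝ)
    (hz1 : x + (n * lam - (b + n) * E) / (b * n) ≤ z)
    (hz2 : z ≤ x + ((a + n) * E - n * lam) / (a * n))
    (hcong : ∃ k : ℤ, (n : ℝ) * z - t3 = k) :
    mu3 a b n t1 t2 t3 ≤ E := by
  obtain ⟨m, hm⟩ := hcong
  have ha0 : (0 : ℝ) < a := by exact_mod_cast ha
  have hab' : (a : ℝ) < b := by exact_mod_cast hab
  have hb0 : (0 : ℝ) < b := ha0.trans hab'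
  have hn0 : (0 : ℝ) < n := by exact_mod_cast ha.trans (hab.trans hbn)
  have hlam : 0 < lam := (div_pos (sub_pos.2 hab') (by positivity)).trans hbig
  obtain ⟨k, hk⟩ := exists_sub_int_div_mem_window (x := x) (z := z) ha0 hab' hn0
    (by rwa [gt_iff_lt, div_lt_iff₀' (by positivity)] at hbig) hlam hE
    (by convert hz1 using 1; field_simp; ring) (by convert hz2 using 1; field_simp; ring)
  obtain ⟨y, hy, hpy⟩ := exists_mem_Icc_abs_sub_le (window_left_le_right ha0 hb0 hlam.le hE)
    (div_nonneg (hlam.le.trans hE) hn0.le) hk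
  obtain ⟨h1, h2⟩ := abs_le_of_mem_window ha0 hab'.le hlam.le hy
  refine mu3_le_of_dni_le y (dni_le_of_abs_sub_int_le (-k1) ?_)
    (dni_le_of_abs_sub_int_le (-k2) ?_) (dni_le_of_abs_sub_int_le (k - m) ?_)
  · rw [← abs_neg]
    convert h1 using 2
    push_cast; linear_combination hbal1
  · rw [← abs_neg]
    convert h2 using 2
    push_cast; linear_combination hbal2
  · rw [show t3 - y * n - ((k - m : ℤ) : ℝ) = n * (z - k / n - y) by
      push_cast; field_simp; linear_combination -hm, abs_mul, abs_of_pos hn0]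
    exact (le_div_iff₀' hn0).1 hpy
end

section
/- Let a < b < n be coprime positive integers with n large enough that (3b−a)/(2n) ≤ L_n, where L_n = (n+ab)/(2(an+bn+ab)). If μ_{a,b}(t1,t2) ≤ 1/(a+b) − L_n, then μ_{a,b,n}(t1,t2,t3) ≤ L_n for all real t3. -/
/-!
Pick `x₀` with `⟨t₁ - x₀ a⟩, ⟨t₂ - x₀ b⟩ ≤ M := 1/(a+b) - Lₙ` (up to `ε`); it remains to
move `x₀` by some `s` so that the third coordinate gets within `Lₙ` of an integer while the first
two stay within `Lₙ`. As `s` runs over an interval of length `ℓ`, `t₃ - (x₀ + s) n` sweeps an interval of length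
`ℓ n`, which meets `Lₙ`-neighbourhoods of the integers as soon as `ℓ n ≥ 1 - 2Lₙ`. Taking the
interval `[-p, q]` on the side where the second coordinate has room (`b p = a q = Lₙ - M`), the
first coordinate drifts by at most `Lₙ - M` and the second stays in `[-Lₙ, Lₙ]` modulo 1; the
only constraint left is `b q ≤ Lₙ`, and this is where the size condition on `n` enters.
-/

lemma dni_nonneg (u : ℝ) : 0 ≤ dni u := abs_nonneg _

lemma dni_le_dni_add_abs_sub (u v : ℝ) : dni u ≤ dni v + |u - v| :=
  calc dni u ≤ |u - round v| := dni_le_abs_sub_intCast _ _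
    _ ≤ |u - v| + |v - round v| := abs_sub_le _ _ _
    _ = dni v + |u - v| := add_comm _ _

lemma exists_abs_sub_le_dni_le (x : ℝ) {r L : ℝ} (hr : 0 ≤ r) (hL : 0 ≤ L)
    (h : 1 / 2 ≤ r + L) : ∃ u, |u - x| ≤ r ∧ dni u ≤ L := by
  set e := x - round x
  have he : |e| ≤ r + L := (abs_sub_round x).trans h
  have hrL : 0 < r + L := by linarith
  have hr' : 0 ≤ r / (r + L) := div_nonneg hr hrL.le
  have hL' : 0 ≤ L / (r + L) := div_nonneg hL hrL.le
  -- move from `x` towards `round x`, splitting the distance `|e|` in the ratio `r : L`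
  refine ⟨x - e * (r / (r + L)), ?_, ?_⟩
  · calc |x - e * (r / (r + L)) - x| = |e| * (r / (r + L)) := by
          rw [sub_sub_cancel_left, abs_neg, abs_mul, abs_of_nonneg hr']
      _ ≤ (r + L) * (r / (r + L)) := mul_le_mul_of_nonneg_right he hr'
      _ = r := mul_div_cancel₀ _ hrL.ne'
  · calc dni (x - e * (r / (r + L))) ≤ |x - e * (r / (r + L)) - round x| :=
          dni_le_abs_sub_intCast _ _
      _ = |e| * (L / (r + L)) := by
          rw [← abs_of_nonneg hL', ← abs_mul]
          congr 1
          field_simp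
          ring
      _ ≤ (r + L) * (L / (r + L)) := mul_le_mul_of_nonneg_right he hL'
      _ = L := mul_div_cancel₀ _ hrL.ne'

lemma exists_mem_Icc_dni_sub_mul_le (w : ℝ) {c d N L : ℝ} (hN : 0 < N) (hcd : c ≤ d)
    (hL : 0 ≤ L) (h : 1 - 2 * L ≤ (d - c) * N) : ∃ s ∈ Set.Icc c d, dni (w - s * N) ≤ L := by
  obtain ⟨u, hu, hdu⟩ := exists_abs_sub_le_dni_le (w - (c + d) / 2 * N)
    (r := (d - c) * N / 2) (by nlinarith) hL (by linarith)
  refine ⟨(w - u) / N, ?_, by rwa [div_mul_cancel₀ _ hN.ne', sub_sub_cancel]⟩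
  rw [abs_le] at hu
  constructor
  · rw [le_div_iff₀ hN]; linarith
  · rw [div_le_iff₀ hN]; linarith

lemma abs_sub_mul_le {B L δ e s p q : ℝ} (hB : 0 ≤ B) (he₀ : 0 ≤ e) (he : e ≤ L - δ)
    (hs : s ∈ Set.Icc (-p) q) (hBp : B * p ≤ δ) (hBq : B * q ≤ L) : |e - s * B| ≤ L := by
  have h₁ := mul_le_mul_of_nonneg_right hs.1 hB
  have h₂ := mul_le_mul_of_nonneg_right hs.2 hB
  rw [abs_le]
  constructor <;> nlinarith

lemma exists_shift {A B N L δ p q w₁ w₂ w₃ : ℝ} (hA : 0 ≤ A) (hAB : A ≤ B) (hN : 0 < N)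
    (hp : 0 ≤ p) (hq : 0 ≤ q) (hpqN : 1 - 2 * L ≤ (p + q) * N)
    (hBp : B * p ≤ δ) (hAq : A * q ≤ δ) (hBq : B * q ≤ L)
    (h₁ : dni w₁ ≤ L - δ) (h₂ : dni w₂ ≤ L - δ) :
    ∃ s, dni (w₁ - s * A) ≤ L ∧ dni (w₂ - s * B) ≤ L ∧ dni (w₃ - s * N) ≤ L := by
  have hApq : A * max p q ≤ δ := by
    rw [mul_max_of_nonneg _ _ hA]
    exact max_le (by nlinarith) hAq
  have hL : 0 ≤ L := by nlinarith [dni_nonneg w₁]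
  have hw₁ : ∀ s, |s| ≤ max p q → dni (w₁ - s * A) ≤ L := fun s hs =>
    calc dni (w₁ - s * A) ≤ dni w₁ + |w₁ - s * A - w₁| := dni_le_dni_add_abs_sub _ _
      _ = dni w₁ + A * |s| := by rw [sub_sub_cancel_left, abs_neg, abs_mul, abs_of_nonneg hA,
          mul_comm]
      _ ≤ (L - δ) + A * max p q := by gcongr
      _ ≤ L := by linarith
  have hw₂ : ∀ s, |w₂ - round w₂ - s * B| ≤ L → dni (w₂ - s * B) ≤ L := fun s hs =>
    (dni_le_abs_sub_intCast _ (round w₂)).trans (by rwa [sub_right_comm])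
  -- shift towards the side where `w₂` has room to move before leaving `[-L, L] + ℤ`
  rcases le_total 0 (w₂ - round w₂) with he | he
  · obtain ⟨s, hs, h₃⟩ := exists_mem_Icc_dni_sub_mul_le w₃ (c := -p) (d := q) hN
      (by linarith) hL (by rwa [sub_neg_eq_add, add_comm])
    refine ⟨s, hw₁ s (abs_le.2 ⟨?_, ?_⟩), hw₂ s ?_, h₃⟩
    · linarith [hs.1, le_max_left p q]
    · linarith [hs.2, le_max_right p q]
    · exact abs_sub_mul_le (hA.trans hAB) he ((le_abs_self _).trans h₂) hs hBp hBq
  · obtain ⟨s, hs, h₃⟩ := exists_mem_Icc_dni_sub_mul_le w₃ (c := -q) (d := p) hN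
      (by linarith) hL (by rwa [sub_neg_eq_add])
    refine ⟨s, hw₁ s (abs_le.2 ⟨?_, ?_⟩), hw₂ s ?_, h₃⟩
    · linarith [hs.1, le_max_right p q]
    · linarith [hs.2, le_max_left p q]
    · have hs' : -s ∈ Set.Icc (-p) q := ⟨neg_le_neg hs.2, neg_le.1 hs.1⟩
      have := abs_sub_mul_le (hA.trans hAB) (neg_nonneg.2 he)
        ((neg_le_abs _).trans h₂) hs' hBp hBq
      rwa [← abs_neg, show -(w₂ - round w₂ - s * B) = -(w₂ - round w₂) - -s * B by ring]

lemma mu3_le_of_mu2_lt {a b n : ℕ} {t₁ t₂ t₃ M L : ℝ} (hmu : mu2 a b t₁ t₂ < M)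
    (hshift : ∀ w₁ w₂ w₃ : ℝ, dni w₁ ≤ M → dni w₂ ≤ M →
      ∃ s, dni (w₁ - s * a) ≤ L ∧ dni (w₂ - s * b) ≤ L ∧ dni (w₃ - s * n) ≤ L) :
    mu3 a b n t₁ t₂ t₃ ≤ L := by
  obtain ⟨x, hx⟩ := exists_lt_of_ciInf_lt hmu
  obtain ⟨s, h₁, h₂, h₃⟩ := hshift (t₁ - x * a) (t₂ - x * b) (t₃ - x * n)
    ((le_max_left _ _).trans hx.le) ((le_max_right _ _).trans hx.le)
  have hbdd : BddBelow (Set.range fun x : ℝ =>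
      max (dni (t₁ - x * a)) (max (dni (t₂ - x * b)) (dni (t₃ - x * n)))) :=
    ⟨0, Set.forall_mem_range.2 fun _ => (dni_nonneg _).trans (le_max_left _ _)⟩
  refine (ciInf_le hbdd (x + s)).trans ?_
  simp only [add_mul, ← sub_sub]
  exact max_le h₁ (max_le h₂ h₃)

/-- The constant `Lₙ` of the statement. -/
noncomputable def Lbound (A B N : ℝ) : ℝ := (N + A * B) / (2 * (A * N + B * N + A * B))

section Lbound

variable {A B N : ℝ}

lemma two_mul_sq_mul_le_of_div_le_Lbound (hA : 0 ≤ A) (hAB : A ≤ B) (hB : 0 < B) (hN : 0 < N)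
    (hn : (3 * B - A) / (2 * N) ≤ Lbound A B N) :
    2 * B ^ 2 * (A + B - 1) ≤ (N + A * B) * (A + B) := by
  rw [Lbound, div_le_div_iff₀ (by positivity) (by positivity)] at hn
  have hlin : (3 * B - A) * (A + B) ≤ N + A * B := by
    refine le_of_mul_le_mul_left ?_ hN
    nlinarith [mul_nonneg (by linarith : 0 ≤ 3 * B - A) (mul_nonneg hA hB.le)]
  -- the difference is `(A + B) (N + A B - 2 B²) + 2 B²` and `N + A B - 2 B² ≥ B² + 2 A B - A²`
  nlinarith [mul_le_mul_of_nonneg_left hlin (by linarith : 0 ≤ A + B),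
    mul_nonneg (by linarith : 0 ≤ A + B) (by nlinarith : 0 ≤ B ^ 2 + 2 * A * B - A ^ 2)]

lemma exists_shift_params (hA : 0 ≤ A) (hAB : A ≤ B) (hB : 1 ≤ B) (hN : 0 < N)
    (hn : (3 * B - A) / (2 * N) ≤ Lbound A B N) :
    ∃ p q : ℝ, 0 ≤ p ∧ 0 ≤ q ∧ 1 - 2 * Lbound A B N ≤ (p + q) * N ∧
      B * p ≤ 2 * Lbound A B N - 1 / (A + B) ∧ A * q ≤ 2 * Lbound A B N - 1 / (A + B) ∧
      B * q ≤ Lbound A B N := by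
  have hE : 0 < A * N + B * N + A * B := by positivity
  have hAB₀ : 0 < A + B := by linarith
  set c := (A + B - 1) / ((A * N + B * N + A * B) * (A + B))
  have hc : 0 ≤ c := div_nonneg (by linarith) (by positivity)
  have hδ : A * B * c = 2 * Lbound A B N - 1 / (A + B) := by
    simp only [c, Lbound]; field_simp; ring
  have hkey := two_mul_sq_mul_le_of_div_le_Lbound hA hAB (by linarith) hN hn
  refine ⟨A * c, B * c, by positivity, by positivity, le_of_eq ?_, le_of_eq ?_,
    le_of_eq ?_, ?_⟩
  · simp only [c, Lbound]; field_simp; ring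
  · rw [← hδ]; ring
  · rw [← hδ]; ring
  · simp only [c, Lbound]
    rw [← mul_div_assoc, ← mul_div_assoc, div_le_div_iff₀ (by positivity) (by positivity)]
    nlinarith [mul_le_mul_of_nonneg_right hkey hE.le]

end Lbound

theorem stmt_9_general (a b n : ℕ) (hab : a < b) (hbn : b < n)
    (hn : (3 * (b : ℝ) - a) / (2 * n) ≤ (n + a * b) / (2 * (a * n + b * n + a * b)))
    (t1 t2 : ℝ)
    (hmu : mu2 a b t1 t2 ≤ 1 / (a + b) - (n + a * b) / (2 * (a * n + b * n + a * b))) :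
    ∀ t3 : ℝ, mu3 a b n t1 t2 t3 ≤ ((n : ℝ) + a * b) / (2 * (a * n + b * n + a * b)) := by
  intro t3
  have hA : (0 : ℝ) ≤ a := a.cast_nonneg
  have hAB : (a : ℝ) ≤ b := by exact_mod_cast hab.le
  have hB : (1 : ℝ) ≤ b := by exact_mod_cast Nat.one_le_of_lt hab
  have hN : (0 : ℝ) < n := by exact_mod_cast Nat.zero_lt_of_lt hbn
  obtain ⟨p, q, hp, hq, hpqN, hBp, hAq, hBq⟩ := exists_shift_params hA hAB hB hN hn
  change mu2 a b t1 t2 ≤ 1 / (a + b) - Lbound a b n at hmu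
  change mu3 a b n t1 t2 t3 ≤ Lbound a b n
  refine le_of_forall_pos_le_add fun ε hε =>
    mu3_le_of_mu2_lt (M := 1 / (a + b) - Lbound a b n + ε) (by linarith) fun w₁ w₂ w₃ h₁ h₂ => ?_
  exact exists_shift hA hAB hN hp hq (by linarith) hBp hAq (by linarith)
    (by linarith) (by linarith)

theorem stmt_9 (a b n : ℕ) (ha : 0 < a) (hab : a < b) (hbn : b < n)
    (hcop : Nat.Coprime a b)
    (hn : (3 * (b : ℝ) - a) / (2 * n) ≤ (n + a * b) / (2 * (a * n + b * n + a * b)))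
    (t1 t2 : ℝ)
    (hmu : mu2 a b t1 t2 ≤ 1 / (a + b) - (n + a * b) / (2 * (a * n + b * n + a * b))) :
    ∀ t3 : ℝ, mu3 a b n t1 t2 t3 ≤ ((n : ℝ) + a * b) / (2 * (a * n + b * n + a * b)) :=
  stmt_9_general a b n hab hbn hn t1 t2 hmu
end

section
/- Let a < b be coprime positive integers. Then the binary Kronecker constant β(a,b) equals the angular Kronecker constant α(a,b) = 1/(2(a+b)). In particular, if a and b are both odd then μ_{a,b}(0,1/2) = μ_{a,b}(1/2,0) = 1/(2(a+b)). -/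
/-- Angular Kronecker constant of the two-element set `{a, b}`. -/
noncomputable def alpha2 (a b : ℕ) : ℝ :=
  sSup {v : ℝ | ∃ t1 t2 : ℝ, v = mu2 a b t1 t2}

/-- Binary Kronecker constant of the two-element set `{a, b}`. -/
noncomputable def beta2 (a b : ℕ) : ℝ :=
  sSup {v : ℝ | ∃ t1 t2 : ℝ, t1 ∈ ({0, 1/2} : Set ℝ) ∧ t2 ∈ ({0, 1/2} : Set ℝ) ∧
    v = mu2 a b t1 t2}

lemma dni_le_abs (u : ℝ) : dni u ≤ |u| := by
  simpa [dni] using round_le u 0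

lemma dni_add_intCast (u : ℝ) (m : ℤ) : dni (u + m) = dni u := by
  simp only [dni, round_add_intCast, Int.cast_add, add_sub_add_right_eq_sub]

lemma half_le_abs_intCast_add_half (k : ℤ) : 1 / 2 ≤ |(k : ℝ) + 1 / 2| := by
  rcases le_or_gt 0 k with hk | hk
  · have : (0 : ℝ) ≤ k := by exact_mod_cast hk
    rw [abs_of_pos (by linarith)]
    linarith
  · have : (k : ℝ) ≤ -1 := by exact_mod_cast Int.le_sub_one_of_lt hk
    rw [abs_of_neg (by linarith)]
    linarith

lemma one_le_two_mul_add_dni {a b : ℕ} {u v : ℝ} {k : ℤ}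
    (h : (b : ℝ) * u - a * v = k + 1 / 2) : 1 ≤ 2 * (b * dni u + a * dni v) := by
  have hround : (b : ℝ) * (u - round u) - a * (v - round v)
      = ((k - b * round u + a * round v : ℤ) : ℝ) + 1 / 2 := by
    push_cast
    linear_combination h
  have := half_le_abs_intCast_add_half (k - b * round u + a * round v)
  calc 1 ≤ 2 * |(b : ℝ) * (u - round u) - a * (v - round v)| := by rw [hround]; linarith
    _ ≤ 2 * (|(b : ℝ) * (u - round u)| + |(a : ℝ) * (v - round v)|) := by
        gcongr; exact abs_sub _ _
    _ = 2 * (b * dni u + a * dni v) := by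
        rw [abs_mul, abs_mul, Nat.abs_cast, Nat.abs_cast, dni, dni]

lemma mu2_le (a b : ℕ) (t1 t2 x : ℝ) :
    mu2 a b t1 t2 ≤ max (dni (t1 - x * a)) (dni (t2 - x * b)) :=
  ciInf_le ⟨0, by rintro _ ⟨y, rfl⟩; exact (dni_nonneg _).trans (le_max_left _ _)⟩ x

lemma one_div_le_mu2_of_sub_eq_intCast_add_half {a b : ℕ} {t1 t2 : ℝ} {k : ℤ}
    (h : (b : ℝ) * t1 - a * t2 = k + 1 / 2) :
    1 / (2 * ((a : ℝ) + b)) ≤ mu2 a b t1 t2 := by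
  refine le_ciInf fun x => ?_
  set M := max (dni (t1 - x * a)) (dni (t2 - x * b))
  have hbound : 1 ≤ 2 * ((a + b) * M) := by
    have : 1 ≤ 2 * (b * dni (t1 - x * a) + a * dni (t2 - x * b)) :=
      one_le_two_mul_add_dni (k := k) (by linear_combination h)
    have hu : dni (t1 - x * a) ≤ M := le_max_left _ _
    have hv : dni (t2 - x * b) ≤ M := le_max_right _ _
    nlinarith [Nat.cast_nonneg (α := ℝ) a, Nat.cast_nonneg (α := ℝ) b]
  exact div_le_of_le_mul₀ (by positivity) ((dni_nonneg _).trans (le_max_left _ _))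
    (by linarith)

lemma Nat.Coprime.exists_mul_sub_mul_eq {a b : ℕ} (hcop : Nat.Coprime a b) (k : ℤ) :
    ∃ m n : ℤ, (b : ℤ) * m - a * n = k := by
  obtain ⟨p, q, hpq⟩ := Nat.isCoprime_iff_coprime.mpr hcop
  exact ⟨k * q, -(k * p), by linear_combination k * hpq⟩

lemma mu2_le_one_div_of_coprime {a b : ℕ} (hcop : Nat.Coprime a b) (t1 t2 : ℝ) :
    mu2 a b t1 t2 ≤ 1 / (2 * ((a : ℝ) + b)) := by
  have hs : (0 : ℝ) < a + b := by
    have : 0 < a + b := by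
      by_contra! h
      obtain ⟨rfl, rfl⟩ : a = 0 ∧ b = 0 := by omega
      simp at hcop
    exact_mod_cast this
  set c := (b : ℝ) * t1 - a * t2
  obtain ⟨m, n, hmn⟩ := hcop.exists_mul_sub_mul_eq (round c)
  have hmn' : (b : ℝ) * m - a * n = round c := by exact_mod_cast hmn
  set u := (c - round c) / (a + b) with hu_def
  set x := (t1 + t2 - m - n) / (a + b) with hx_def
  have h1 : t1 - x * a = u + m := by
    rw [hx_def, hu_def]
    field_simp
    linear_combination (-1 : ℝ) * hmn'
  have h2 : t2 - x * b = -u + n := by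
    rw [hx_def, hu_def]
    field_simp
    linear_combination hmn'
  have hu : |u| ≤ 1 / (2 * ((a : ℝ) + b)) := by
    rw [abs_div, abs_of_pos hs, div_le_div_iff₀ hs (by positivity)]
    nlinarith [abs_sub_round c]
  calc mu2 a b t1 t2 ≤ max (dni (t1 - x * a)) (dni (t2 - x * b)) := mu2_le a b t1 t2 x
    _ ≤ 1 / (2 * ((a : ℝ) + b)) := by
      rw [h1, h2, dni_add_intCast, dni_add_intCast]
      exact max_le ((dni_le_abs u).trans hu) ((dni_le_abs (-u)).trans (abs_neg u ▸ hu))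

lemma mu2_zero_half_of_odd {a b : ℕ} (hcop : Nat.Coprime a b) (ha : Odd a) :
    mu2 a b 0 (1 / 2) = 1 / (2 * ((a : ℝ) + b)) := by
  obtain ⟨j, rfl⟩ := ha
  refine (mu2_le_one_div_of_coprime hcop _ _).antisymm
    (one_div_le_mu2_of_sub_eq_intCast_add_half (k := -j - 1) ?_)
  push_cast
  ring

lemma mu2_half_zero_of_odd {a b : ℕ} (hcop : Nat.Coprime a b) (hb : Odd b) :
    mu2 a b (1 / 2) 0 = 1 / (2 * ((a : ℝ) + b)) := by
  obtain ⟨j, rfl⟩ := hb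
  refine (mu2_le_one_div_of_coprime hcop _ _).antisymm
    (one_div_le_mu2_of_sub_eq_intCast_add_half (k := j) ?_)
  push_cast
  ring

lemma Nat.Coprime.odd_or_odd {a b : ℕ} (hcop : Nat.Coprime a b) : Odd a ∨ Odd b := by
  by_contra! h
  simp only [Nat.not_odd_iff_even] at h
  have := Nat.eq_one_of_dvd_coprimes hcop h.1.two_dvd h.2.two_dvd
  omega

theorem stmt_11_general (a b : ℕ) (hcop : Nat.Coprime a b) :
    beta2 a b = alpha2 a b ∧ alpha2 a b = 1 / (2 * ((a : ℝ) + b)) ∧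
    (Odd a → Odd b →
      mu2 a b 0 (1/2) = 1 / (2 * ((a : ℝ) + b)) ∧
      mu2 a b (1/2) 0 = 1 / (2 * ((a : ℝ) + b))) := by
  obtain ⟨s1, s2, hs1, hs2, hs⟩ : ∃ t1 t2 : ℝ, t1 ∈ ({0, 1/2} : Set ℝ) ∧
      t2 ∈ ({0, 1/2} : Set ℝ) ∧ mu2 a b t1 t2 = 1 / (2 * ((a : ℝ) + b)) := by
    rcases hcop.odd_or_odd with ha | hb
    · exact ⟨0, 1/2, .inl rfl, .inr rfl, mu2_zero_half_of_odd hcop ha⟩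
    · exact ⟨1/2, 0, .inr rfl, .inl rfl, mu2_half_zero_of_odd hcop hb⟩
  have halpha : alpha2 a b = 1 / (2 * ((a : ℝ) + b)) :=
    IsGreatest.csSup_eq ⟨⟨s1, s2, hs.symm⟩,
      by rintro _ ⟨t1, t2, rfl⟩; exact mu2_le_one_div_of_coprime hcop t1 t2⟩
  have hbeta : beta2 a b = 1 / (2 * ((a : ℝ) + b)) :=
    IsGreatest.csSup_eq ⟨⟨s1, s2, hs1, hs2, hs.symm⟩,
      by rintro _ ⟨t1, t2, -, -, rfl⟩; exact mu2_le_one_div_of_coprime hcop t1 t2⟩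
  exact ⟨hbeta.trans halpha.symm, halpha,
    fun ha hb => ⟨mu2_zero_half_of_odd hcop ha, mu2_half_zero_of_odd hcop hb⟩⟩

theorem stmt_11 (a b : ℕ) (ha : 0 < a) (hab : a < b) (hcop : Nat.Coprime a b) :
    beta2 a b = alpha2 a b ∧ alpha2 a b = 1 / (2 * ((a : ℝ) + b)) ∧
    (Odd a → Odd b →
      mu2 a b 0 (1/2) = 1 / (2 * ((a : ℝ) + b)) ∧
      mu2 a b (1/2) 0 = 1 / (2 * ((a : ℝ) + b))) :=
  stmt_11_general a b hcop
end

section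
/- Let a < b be coprime positive integers and n sufficiently large with n ≡ a² (mod a+b). Set L_n = (n+ab)/(2(an+bn+ab)), t1 = 0, t2 = ((a+b)/a)·(1/(a+b) − L_n), and t3 = n·(a+n)(n+ab)/(2an(an+bn+ab)). Then μ_{a,b,n}(t1,t2,t3) = L_n; in particular α(a,b,n) ≥ L_n. -/
noncomputable def Ln (a b n : ℕ) : ℝ := ((n : ℝ) + a * b) / (2 * (a * n + b * n + a * b))

lemma dni_le_abs_sub (u : ℝ) (k : ℤ) : dni u ≤ |u - k| := round_le u k

lemma dni_le_half (u : ℝ) : dni u ≤ 1 / 2 := abs_sub_round u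

lemma exists_abs_sub_lt_of_dni_lt {u L : ℝ} (h : dni u < L) : ∃ k : ℤ, |u - k| < L :=
  ⟨round u, h⟩

lemma abs_mul_add_mul_lt {p q u v L : ℝ} (hp : 0 < p) (hq : 0 < q) (hu : |u| < L)
    (hv : |v| < L) : |p * u + q * v| < (p + q) * L :=
  calc |p * u + q * v| ≤ p * |u| + q * |v| := by
        simpa only [abs_mul, abs_of_pos hp, abs_of_pos hq] using abs_add_le (p * u) (q * v)
    _ < p * L + q * L := add_lt_add (mul_lt_mul_of_pos_left hu hp) (mul_lt_mul_of_pos_left hv hq)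
    _ = (p + q) * L := by ring

lemma Int.eq_zero_of_abs_sub_one_sub_lt {M : ℤ} {c : ℝ} (hc : c < 1)
    (h : |(M : ℝ) - (1 - c)| < c) : M = 0 := by
  rw [abs_lt] at h
  have hM : |(M : ℝ)| < 1 := abs_lt.2 ⟨by linarith, by linarith⟩
  exact Int.abs_lt_one_iff.1 (by exact_mod_cast hM)

lemma IsCoprime.exists_eq_mul_of_mul_eq_mul {R : Type*} [CommRing R] [IsDomain R] {a b k l : R}
    (hab : IsCoprime a b) (ha : a ≠ 0) (h : a * l = b * k) : ∃ j, k = a * j ∧ l = b * j := by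
  obtain ⟨j, rfl⟩ := hab.dvd_of_dvd_mul_left ⟨l, h.symm⟩
  exact ⟨j, rfl, mul_left_cancel₀ ha (by rw [h]; ring)⟩

lemma mu3_bddBelow (a b n : ℕ) (t1 t2 t3 : ℝ) :
    BddBelow (Set.range fun x : ℝ =>
      max (dni (t1 - x * a)) (max (dni (t2 - x * b)) (dni (t3 - x * n)))) :=
  ⟨0, by rintro v ⟨x, rfl⟩; exact (abs_nonneg _).trans (le_max_left _ _)⟩

lemma mu3_le_half (a b n : ℕ) (t1 t2 t3 : ℝ) : mu3 a b n t1 t2 t3 ≤ 1 / 2 :=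
  ciInf_le_of_le (mu3_bddBelow a b n t1 t2 t3) 0
    (max_le (dni_le_half _) (max_le (dni_le_half _) (dni_le_half _)))

lemma mu3_le_alpha3 (a b n : ℕ) (t1 t2 t3 : ℝ) : mu3 a b n t1 t2 t3 ≤ alpha3 a b n :=
  le_csSup ⟨1 / 2, by rintro v ⟨s1, s2, s3, rfl⟩; exact mu3_le_half a b n s1 s2 s3⟩
    ⟨t1, t2, t3, rfl⟩

section

variable {a b n : ℕ} {L t2 t3 : ℝ}

lemma mu3_zero_le (hb : 0 < b) (haL : 2 * a * L ≤ 1) (habL : 1 ≤ 2 * (a + b) * L)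
    (ht2 : a * t2 = 1 - (a + b) * L) (ht23 : n * t2 - b * t3 = (n + b) * L - b) :
    mu3 a b n 0 t2 t3 ≤ L := by
  have hb' : (0 : ℝ) < b := by exact_mod_cast hb
  have hL : 0 ≤ L := by nlinarith
  obtain ⟨x, hx⟩ : ∃ x : ℝ, x * b = t2 - L := ⟨(t2 - L) / b, div_mul_cancel₀ _ hb'.ne'⟩
  have e1 : 0 - x * a = ((2 * a + b) * L - 1) / b := by
    rw [eq_div_iff hb'.ne']; linear_combination (-(a : ℝ)) * hx - ht2
  have e2 : t2 - x * b = L := by linear_combination -hx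
  have e3 : t3 - x * n = 1 - L :=
    mul_left_cancel₀ hb'.ne' (by linear_combination -ht23 - (n : ℝ) * hx)
  refine (ciInf_le (mu3_bddBelow a b n 0 t2 t3) x).trans ?_
  rw [e1, e2, e3]
  refine max_le ((dni_le_abs_sub _ 0).trans ?_) (max_le ((dni_le_abs_sub _ 0).trans ?_)
    ((dni_le_abs_sub _ 1).trans ?_))
  · rw [Int.cast_zero, sub_zero, abs_div, abs_of_pos hb', div_le_iff₀ hb', abs_le]
    constructor <;> linarith
  · rw [Int.cast_zero, sub_zero, abs_of_nonneg hL]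
  · rw [Int.cast_one, sub_sub_cancel_left, abs_neg, abs_of_nonneg hL]

lemma le_mu3_zero (ha : 0 < a) (hb : 0 < b) (hn : 0 < n) (hcop : a.Coprime b)
    (habL : (a + b) * L < 1) (ht2 : a * t2 = 1 - (a + b) * L) (ht3 : a * t3 = (n + a) * L)
    (ht23 : n * t2 - b * t3 = (n + b) * L - b) :
    L ≤ mu3 a b n 0 t2 t3 := by
  have ha' : (0 : ℝ) < a := by exact_mod_cast ha
  have hb' : (0 : ℝ) < b := by exact_mod_cast hb
  have hn' : (0 : ℝ) < n := by exact_mod_cast hn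
  refine le_ciInf fun x => ?_
  by_contra! h
  simp only [max_lt_iff] at h
  obtain ⟨h1, h2, h3⟩ := h
  obtain ⟨k1, h1⟩ := exists_abs_sub_lt_of_dni_lt h1
  obtain ⟨k2, h2⟩ := exists_abs_sub_lt_of_dni_lt h2
  obtain ⟨k3, h3⟩ := exists_abs_sub_lt_of_dni_lt h3
  have hk : (a : ℤ) * k2 = b * k1 := by
    have hM := abs_mul_add_mul_lt ha' hb' (abs_sub_comm (t2 - x * b) k2 ▸ h2) h1
    rw [show (a : ℝ) * (k2 - (t2 - x * b)) + b * (0 - x * a - k1)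
        = ((a * k2 - b * k1 : ℤ) : ℝ) - (1 - (a + b) * L) by
      push_cast; linear_combination -ht2] at hM
    exact sub_eq_zero.1 (Int.eq_zero_of_abs_sub_one_sub_lt habL hM)
  obtain ⟨j, rfl, rfl⟩ := (Nat.isCoprime_iff_coprime.2 hcop).exists_eq_mul_of_mul_eq_mul
    (by exact_mod_cast ha.ne') hk
  have hneg : (n : ℤ) * j - k3 < 0 := by
    have hE := abs_mul_add_mul_lt hn' ha' (abs_sub_comm (0 - x * a) _ ▸ h1) h3
    rw [show (n : ℝ) * ((a * j : ℤ) - (0 - x * a)) + a * (t3 - x * n - k3)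
        = a * ((n * j - k3 : ℤ) : ℝ) + (n + a) * L by
      push_cast; linear_combination ht3] at hE
    have : (a : ℝ) * ((n * j - k3 : ℤ) : ℝ) < 0 := by
      linarith [le_abs_self ((a : ℝ) * ((n * j - k3 : ℤ) : ℝ) + (n + a) * L)]
    exact_mod_cast neg_of_mul_neg_right this ha'.le
  have hnonneg : 0 < (n : ℤ) * j - k3 + 1 := by
    have hE := abs_mul_add_mul_lt hn' hb' (abs_sub_comm (t2 - x * b) _ ▸ h2) h3
    rw [show (n : ℝ) * ((b * j : ℤ) - (t2 - x * b)) + b * (t3 - x * n - k3)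
        = b * ((n * j - k3 + 1 : ℤ) : ℝ) - (n + b) * L by
      push_cast; linear_combination -ht23] at hE
    have : 0 < (b : ℝ) * ((n * j - k3 + 1 : ℤ) : ℝ) := by
      linarith [neg_abs_le ((b : ℝ) * ((n * j - k3 + 1 : ℤ) : ℝ) - (n + b) * L)]
    exact_mod_cast pos_of_mul_pos_right this hb'.le
  omega

end

lemma one_le_two_mul_Ln {a b : ℕ} (ha : 0 < a) (hb : 0 < b) (n : ℕ) :
    1 ≤ 2 * ((a : ℝ) + b) * Ln a b n := by
  have ha' : (1 : ℝ) ≤ a := by exact_mod_cast ha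
  have hb' : (1 : ℝ) ≤ b := by exact_mod_cast hb
  rw [Ln, ← mul_div_assoc, le_div_iff₀ (by positivity)]
  nlinarith [mul_pos (zero_lt_one.trans_le ha') (zero_lt_one.trans_le hb')]

lemma mul_Ln_lt_one {a b n : ℕ} (ha : 0 < a) (hb : 0 < b) (hn : a * b * (a + b) ≤ n) :
    ((a : ℝ) + b) * Ln a b n < 1 := by
  have ha' : (1 : ℝ) ≤ a := by exact_mod_cast ha
  have hb' : (1 : ℝ) ≤ b := by exact_mod_cast hb
  have hn' : (a : ℝ) * b * (a + b) ≤ n := by exact_mod_cast hn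
  rw [Ln, ← mul_div_assoc, div_lt_one (by positivity)]
  nlinarith [mul_pos (zero_lt_one.trans_le ha') (zero_lt_one.trans_le hb')]

lemma two_mul_Ln_le_one {a b n : ℕ} (ha : 0 < a) (hb : 0 < b) (hn : a ^ 2 ≤ n) :
    2 * (a : ℝ) * Ln a b n ≤ 1 := by
  have hb' : (0 : ℝ) < b := by exact_mod_cast hb
  have hn' : (a : ℝ) ^ 2 ≤ n := by exact_mod_cast hn
  have ha' : (0 : ℝ) < a := by exact_mod_cast ha
  rw [Ln, ← mul_div_assoc, div_le_one (by positivity)]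
  nlinarith [mul_le_mul_of_nonneg_left hn' hb'.le]

theorem stmt_18 (a b : ℕ) (ha : 0 < a) (hab : a < b) (hcop : Nat.Coprime a b) :
    ∃ N : ℕ, ∀ n : ℕ, N ≤ n → b < n → n % (a + b) = a ^ 2 % (a + b) →
      mu3 a b n 0
        ((((a : ℝ) + b) / a) * (1 / ((a : ℝ) + b) - ((n : ℝ) + a * b) / (2 * (a * n + b * n + a * b))))
        ((n : ℝ) * (((a : ℝ) + n) * (n + a * b) / (2 * a * n * (a * n + b * n + a * b))))
        = ((n : ℝ) + a * b) / (2 * (a * n + b * n + a * b)) ∧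
      alpha3 a b n ≥ ((n : ℝ) + a * b) / (2 * (a * n + b * n + a * b)) := by
  refine ⟨a ^ 2 + a * b * (a + b), fun n hN hbn _ => ?_⟩
  show mu3 a b n 0 ((((a : ℝ) + b) / a) * (1 / ((a : ℝ) + b) - Ln a b n)) _ = Ln a b n ∧
    alpha3 a b n ≥ Ln a b n
  have hb : 0 < b := ha.trans hab
  have hn : 0 < n := hb.trans hbn
  have ha' : (a : ℝ) ≠ 0 := by positivity
  have hn' : (n : ℝ) ≠ 0 := by positivity
  have hs : (a : ℝ) * n + b * n + a * b ≠ 0 := by positivity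
  set t2 := (((a : ℝ) + b) / a) * (1 / ((a : ℝ) + b) - Ln a b n)
  set t3 := (n : ℝ) * (((a : ℝ) + n) * (n + a * b) / (2 * a * n * (a * n + b * n + a * b)))
  have ht2 : a * t2 = 1 - (a + b) * Ln a b n := by simp only [t2, Ln]; field_simp
  have ht3 : a * t3 = (n + a) * Ln a b n := by simp only [t3, Ln]; field_simp; ring
  have ht23 : n * t2 - b * t3 = (n + b) * Ln a b n - b := by
    simp only [t2, t3, Ln]; field_simp; ring
  have hmu : mu3 a b n 0 t2 t3 = Ln a b n := le_antisymm
    (mu3_zero_le hb (two_mul_Ln_le_one ha hb (by omega)) (one_le_two_mul_Ln ha hb n) ht2 ht23)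
    (le_mu3_zero ha hb hn hcop (mul_Ln_lt_one ha hb (by omega)) ht2 ht3 ht23)
  exact ⟨hmu, hmu ▸ mu3_le_alpha3 a b n 0 t2 t3⟩
end

section
/- Let a < b < n be positive coprime integers odd case: with (t1,t2) = (1/2,0) if b is odd and (0,1/2) if b is even, and n ≡ r (mod 2a+2b) with r ∈ [0,2a+2b), and (g+h)r ≡ S (mod 2a+2b) with S ∈ [0,2a+2b), where g,h are integers with ag − bh = 1 chosen as in the paper. Then for n sufficiently large, μ_{a,b,n}(t1,t2,0) = 1/(2(a+b)) if S ∈ {0, 1, 2a+2b−1}; = (n+bS)/(2(a+b)(b+n)) if 2 ≤ S ≤ 2a; and = (n+2a²+2ab−aS)/(2(a+b)(a+n)) if 2a < S ≤ 2a+2b−2. -/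
lemma dni_neg_le (u : ℝ) : dni (-u) ≤ dni u :=
  calc dni (-u) ≤ |-u - ((-round u : ℤ) : ℝ)| := dni_le_abs_sub_intCast _ _
    _ = dni u := by rw [dni, ← abs_neg]; push_cast; ring_nf

lemma dni_neg (u : ℝ) : dni (-u) = dni u :=
  le_antisymm (dni_neg_le u) (by simpa using dni_neg_le (-u))

section LineCost

variable {a b n S : ℝ}

noncomputable def lineCost (a b n S u : ℝ) : ℝ :=
  max |1 / (2 * (a + b)) + u * a|
    (max |1 / (2 * (a + b)) - u * b| (dni (S / (2 * (a + b)) + u * n)))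

noncomputable def lineInf (a b n S : ℝ) : ℝ := ⨅ u, lineCost a b n S u

noncomputable def crossingValue (a b n S : ℝ) : ℝ := (n + b * S) / (2 * (a + b) * (b + n))

lemma lineCost_nonneg (u : ℝ) : 0 ≤ lineCost a b n S u := le_max_of_le_left (abs_nonneg _)

lemma lineInf_le_lineCost (u : ℝ) : lineInf a b n S ≤ lineCost a b n S u :=
  ciInf_le ⟨0, by rintro _ ⟨v, rfl⟩; exact lineCost_nonneg v⟩ u

lemma lineCost_swap (hab : a + b ≠ 0) (u : ℝ) :
    lineCost b a n (2 * (a + b) - S) (-u) = lineCost a b n S u := by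
  have h3 : (2 * (a + b) - S) / (2 * (b + a)) + -u * n
      = -(S / (2 * (a + b)) + u * n) + ((1 : ℤ) : ℝ) := by
    rw [add_comm b a]; field_simp; push_cast; ring
  rw [lineCost, lineCost, h3, dni_add_intCast, dni_neg, add_comm b a, max_left_comm]
  simp only [neg_mul, sub_neg_eq_add, ← sub_eq_add_neg]

lemma one_div_le_lineCost (ha : 0 ≤ a) (hb : 0 ≤ b) (u : ℝ) :
    1 / (2 * (a + b)) ≤ lineCost a b n S u := by
  rcases le_total 0 u with hu | hu
  · exact le_max_of_le_left ((le_add_of_nonneg_right (mul_nonneg hu ha)).trans (le_abs_self _))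
  · refine le_max_of_le_right (le_max_of_le_left ?_)
    exact (le_sub_self_iff _ |>.2 (mul_nonpos_of_nonpos_of_nonneg hu hb)).trans (le_abs_self _)

lemma crossingValue_le_max (hb : 0 ≤ b) (hn : 0 < n) (hab : 0 < a + b) {m : ℤ} (hm : m ≤ 0)
    (u : ℝ) :
    crossingValue a b n S ≤
      max |1 / (2 * (a + b)) - u * b| |S / (2 * (a + b)) + u * n - m| := by
  set W := max |1 / (2 * (a + b)) - u * b| |S / (2 * (a + b)) + u * n - m|
  have h1 : n * (1 / (2 * (a + b)) - u * b) ≤ n * W :=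
    mul_le_mul_of_nonneg_left ((le_abs_self _).trans (le_max_left _ _)) hn.le
  have h2 : b * (S / (2 * (a + b)) + u * n - m) ≤ b * W :=
    mul_le_mul_of_nonneg_left ((le_abs_self _).trans (le_max_right _ _)) hb
  have hbm : b * m ≤ 0 := mul_nonpos_of_nonneg_of_nonpos hb (by exact_mod_cast hm)
  rw [crossingValue, div_le_iff₀ (by positivity)]
  have key : (n + b * S) / (2 * (a + b)) ≤ (n + b) * W := by
    calc (n + b * S) / (2 * (a + b))
        = n * (1 / (2 * (a + b)) - u * b) + b * (S / (2 * (a + b)) + u * n - m) + b * m := by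
          field_simp; ring
      _ ≤ (n + b) * W := by linarith
  rw [div_le_iff₀ (by positivity)] at key
  linarith

lemma min_crossingValue_le_lineCost (ha : 0 ≤ a) (hb : 0 ≤ b) (hn : 0 < n) (hab : 0 < a + b)
    (u : ℝ) :
    min (crossingValue a b n S) (crossingValue b a n (2 * (a + b) - S)) ≤ lineCost a b n S u := by
  set m := round (S / (2 * (a + b)) + u * n)
  have hd : dni (S / (2 * (a + b)) + u * n) = |S / (2 * (a + b)) + u * n - m| := rfl
  rcases le_or_gt m 0 with hm | hm
  · refine (min_le_left _ _).trans ((crossingValue_le_max hb hn hab hm u).trans ?_)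
    rw [lineCost, hd]
    exact le_max_right _ _
  · have hm' : 1 - m ≤ 0 := by omega
    have h := crossingValue_le_max (a := b) (S := 2 * (a + b) - S) ha hn (by linarith) hm' (-u)
    have e1 : 1 / (2 * (b + a)) - -u * a = 1 / (2 * (a + b)) + u * a := by rw [add_comm b a]; ring
    have e2 : (2 * (a + b) - S) / (2 * (b + a)) + -u * n - ((1 - m : ℤ) : ℝ)
        = -(S / (2 * (a + b)) + u * n - m) := by
      rw [add_comm b a]; field_simp; push_cast; ring
    rw [e1, e2, abs_neg] at h
    refine (min_le_right _ _).trans (h.trans ?_)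
    rw [lineCost, hd]
    exact max_le_max_left _ (le_max_right _ _)

lemma exists_lineCost_le_crossingValue (ha : 0 ≤ a) (hb : 0 ≤ b) (hn : 0 < n) (hS1 : 1 ≤ S)
    (hSM : S ≤ 2 * (a + b)) (hna : a * (a + b) ≤ n) :
    ∃ u, lineCost a b n S u ≤ crossingValue a b n S := by
  have hab : 0 < a + b := by linarith
  have hD : 0 < 2 * (a + b) * (b + n) := by positivity
  set u := -(S - 1) / (2 * (a + b) * (b + n)) with hu
  have hv : 0 ≤ crossingValue a b n S := by unfold crossingValue; positivity
  have e1 : 1 / (2 * (a + b)) + u * a = (b + n - a * (S - 1)) / (2 * (a + b) * (b + n)) := by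
    rw [hu]; field_simp; ring
  have e2 : 1 / (2 * (a + b)) - u * b = crossingValue a b n S := by
    rw [hu, crossingValue]; field_simp; ring
  have e3 : S / (2 * (a + b)) + u * n = crossingValue a b n S := by
    rw [hu, crossingValue]; field_simp; ring
  refine ⟨u, max_le ?_ (max_le ?_ ?_)⟩
  · rw [e1, abs_div, abs_of_pos hD, crossingValue]
    refine div_le_div_of_nonneg_right (abs_le.2 ⟨?_, ?_⟩) hD.le
    · nlinarith [mul_le_mul_of_nonneg_left hSM ha]
    · nlinarith
  · rw [e2, abs_of_nonneg hv]
  · rw [e3]; exact (dni_le_abs _).trans (abs_of_nonneg hv).le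

lemma crossingValue_le_three_div (hb : 0 ≤ b) (hn : 0 < n) (hab : 0 < a + b)
    (hSM : S ≤ 2 * (a + b)) (hnb : b * (a + b) ≤ n) :
    crossingValue a b n S ≤ 3 / (2 * (a + b)) := by
  rw [crossingValue, div_le_div_iff₀ (by positivity) (by positivity)]
  nlinarith [mul_le_mul_of_nonneg_left hSM hb]

lemma crossingValue_le_crossingValue_swap (ha : 0 ≤ a) (hab : a ≤ b) (hn : 0 < n)
    (hab0 : 0 < a + b) (hS : S ≤ 2 * a) :
    crossingValue a b n S ≤ crossingValue b a n (2 * (a + b) - S) := by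
  have key : 0 ≤ n * (b - a) + n * (a + b) * (2 * a - S) + a * b * (2 * (a + b) - 2 * S) := by
    have := mul_nonneg (mul_nonneg hn.le hab0.le) (sub_nonneg.2 hS)
    have := mul_nonneg (mul_nonneg ha (ha.trans hab)) (by linarith : 0 ≤ 2 * (a + b) - 2 * S)
    nlinarith
  rw [crossingValue, crossingValue, div_le_div_iff₀ (by nlinarith) (by nlinarith)]
  nlinarith [mul_nonneg hab0.le key]

lemma crossingValue_swap_le_crossingValue (ha : 0 ≤ a) (hb : 0 ≤ b) (hn : 0 < n)
    (hab0 : 0 < a + b) (hS : 2 * a + 1 ≤ S) (hnb : b * (a + b) ≤ n) :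
    crossingValue b a n (2 * (a + b) - S) ≤ crossingValue a b n S := by
  have key : 0 ≤ n * ((a + b) * (S - 2 * a) - (b - a)) + a * b * (2 * S - 2 * (a + b)) := by
    have := mul_nonneg (mul_nonneg hn.le hab0.le) (by linarith : 0 ≤ S - 2 * a - 1)
    have := mul_nonneg ha (by nlinarith : 0 ≤ n - b * b)
    have := mul_nonneg (mul_nonneg ha hb) (by linarith : 0 ≤ S - 2 * a - 1)
    have := mul_nonneg (mul_nonneg ha hb) (by linarith : 0 ≤ 2 * a + 2)
    nlinarith
  rw [crossingValue, crossingValue, div_le_div_iff₀ (by nlinarith) (by nlinarith)]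
  nlinarith [mul_nonneg hab0.le key]

lemma lineInf_le_one_div (hab : 0 < a + b) (hS : dni (S / (2 * (a + b))) ≤ 1 / (2 * (a + b))) :
    lineInf a b n S ≤ 1 / (2 * (a + b)) := by
  refine (lineInf_le_lineCost 0).trans ?_
  have hε : 0 < 1 / (2 * (a + b)) := by positivity
  simp only [lineCost, zero_mul, add_zero, sub_zero, abs_of_pos hε]
  exact max_le le_rfl (max_le le_rfl hS)

lemma lineInf_le_three_div (ha : 0 ≤ a) (hb : 0 ≤ b) (hn : 0 < n) (hab : 0 < a + b)
    (hS0 : 0 ≤ S) (hSM : S ≤ 2 * (a + b)) (hna : a * (a + b) ≤ n) (hnb : b * (a + b) ≤ n) :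
    lineInf a b n S ≤ 3 / (2 * (a + b)) := by
  rcases le_or_gt 1 S with hS1 | hS1
  · obtain ⟨u, hu⟩ := exists_lineCost_le_crossingValue ha hb hn hS1 hSM hna
    exact (lineInf_le_lineCost u).trans (hu.trans (crossingValue_le_three_div hb hn hab hSM hnb))
  · have hdni : dni (S / (2 * (a + b))) ≤ 1 / (2 * (a + b)) := by
      refine (dni_le_abs _).trans ?_
      rw [abs_of_nonneg (by positivity)]
      gcongr
    exact (lineInf_le_one_div hab hdni).trans (by gcongr; norm_num)

lemma lineInf_eq_one_div (ha : 0 ≤ a) (hb : 0 ≤ b) (hab : 0 < a + b)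
    (hS : S = 0 ∨ S = 1 ∨ S + 1 = 2 * (a + b)) :
    lineInf a b n S = 1 / (2 * (a + b)) := by
  have hε : 0 < 1 / (2 * (a + b)) := by positivity
  have hdni : dni (S / (2 * (a + b))) ≤ 1 / (2 * (a + b)) := by
    rcases hS with rfl | rfl | hS
    · simpa [dni] using hε.le
    · exact (dni_le_abs _).trans (abs_of_pos hε).le
    · calc dni (S / (2 * (a + b)))
          ≤ |S / (2 * (a + b)) - ((1 : ℤ) : ℝ)| := dni_le_abs_sub_intCast _ 1
        _ = 1 / (2 * (a + b)) := by
          rw [← abs_of_pos hε, ← abs_neg, show S = 2 * (a + b) - 1 by linarith]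
          congr 1; field_simp; push_cast; ring
  exact le_antisymm (lineInf_le_one_div hab hdni) (le_ciInf (one_div_le_lineCost ha hb))

lemma lineInf_eq_crossingValue (ha : 0 ≤ a) (hab : a ≤ b) (hn : 0 < n) (hS1 : 1 ≤ S)
    (hS : S ≤ 2 * a) (hna : a * (a + b) ≤ n) :
    lineInf a b n S = crossingValue a b n S := by
  obtain ⟨u, hu⟩ := exists_lineCost_le_crossingValue ha (ha.trans hab) hn hS1 (by linarith) hna
  refine le_antisymm ((lineInf_le_lineCost u).trans hu) (le_ciInf fun v => ?_)
  calc crossingValue a b n S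
      = min (crossingValue a b n S) (crossingValue b a n (2 * (a + b) - S)) :=
        (min_eq_left (crossingValue_le_crossingValue_swap ha hab hn (by linarith) hS)).symm
    _ ≤ lineCost a b n S v := min_crossingValue_le_lineCost ha (ha.trans hab) hn (by linarith) v

lemma lineInf_eq_crossingValue_swap (ha : 0 ≤ a) (hb : 0 ≤ b) (hn : 0 < n)
    (hS : 2 * a + 1 ≤ S) (hSM : S + 1 ≤ 2 * (a + b)) (hnb : b * (a + b) ≤ n) :
    lineInf a b n S = crossingValue b a n (2 * (a + b) - S) := by
  have hab : 0 < a + b := by linarith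
  obtain ⟨u, hu⟩ := exists_lineCost_le_crossingValue (a := b) (b := a) (S := 2 * (a + b) - S)
    hb ha hn (by linarith) (by linarith) (by linarith)
  refine le_antisymm ?_ (le_ciInf fun v => ?_)
  · calc lineInf a b n S ≤ lineCost a b n S (-u) := lineInf_le_lineCost _
      _ = lineCost b a n (2 * (a + b) - S) u := by rw [← lineCost_swap hab.ne', neg_neg]
      _ ≤ _ := hu
  · calc crossingValue b a n (2 * (a + b) - S)
        = min (crossingValue a b n S) (crossingValue b a n (2 * (a + b) - S)) :=
          (min_eq_right (crossingValue_swap_le_crossingValue ha hb hn hab hS hnb)).symm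
      _ ≤ lineCost a b n S v := min_crossingValue_le_lineCost ha hb hn hab v

end LineCost

section Reduction

variable {a b n : ℕ} {g h : ℤ} {t1 t2 S : ℝ}

noncomputable def pairCost (n : ℕ) (g h : ℤ) (e₁ e₂ : ℝ) : ℝ :=
  max |e₁| (max |e₂| (dni (n * (g * e₁ - h * e₂))))

lemma pairCost_neg (e₁ e₂ : ℝ) :
    pairCost n g h (-e₁) (-e₂) = pairCost n g h e₁ e₂ := by
  have h3 : (n : ℝ) * (g * -e₁ - h * -e₂) = -(n * (g * e₁ - h * e₂)) := by ring
  rw [pairCost, pairCost, abs_neg, abs_neg, h3, dni_neg]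

lemma abs_sub_le_pairCost (e₁ e₂ : ℝ) :
    |(b : ℝ) * e₁ - a * e₂| ≤ (a + b) * pairCost n g h e₁ e₂ := by
  have h1 : |e₁| ≤ pairCost n g h e₁ e₂ := le_max_left _ _
  have h2 : |e₂| ≤ pairCost n g h e₁ e₂ := (le_max_left _ _).trans (le_max_right _ _)
  calc |(b : ℝ) * e₁ - a * e₂| ≤ |(b : ℝ) * e₁| + |(a : ℝ) * e₂| := abs_sub _ _
    _ = b * |e₁| + a * |e₂| := by rw [abs_mul, abs_mul, Nat.abs_cast, Nat.abs_cast]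
    _ ≤ b * pairCost n g h e₁ e₂ + a * pairCost n g h e₁ e₂ := by gcongr
    _ = (a + b) * pairCost n g h e₁ e₂ := by ring

lemma exists_pairCost_eq (hgh : (a : ℝ) * g - b * h = 1) {K L : ℤ}
    (hK : (b : ℝ) * t1 - a * t2 = K + 1 / 2) (hL : (g : ℝ) * t1 - h * t2 = L) (x : ℝ) :
    ∃ e₁ e₂ : ℝ, ∃ k : ℤ, (b : ℝ) * e₁ - a * e₂ = k + 1 / 2 ∧
      max (dni (t1 - x * a)) (max (dni (t2 - x * b)) (dni (0 - x * n))) =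
        pairCost n g h e₁ e₂ := by
  set p := round (t1 - x * a)
  set q := round (t2 - x * b)
  refine ⟨t1 - x * a - p, t2 - x * b - q, K - (b * p - a * q),
    by push_cast; linear_combination hK, ?_⟩
  have h3 : (0 : ℝ) - x * n = n * (g * (t1 - x * a - p) - h * (t2 - x * b - q))
      + ((n * (g * p - h * q - L) : ℤ) : ℝ) := by
    push_cast; linear_combination (x * n) * hgh - n * hL
  rw [pairCost, h3, dni_add_intCast]
  rfl

lemma mu3_le_pairCost (hgh : (a : ℝ) * g - b * h = 1) {K L : ℤ}
    (hK : (b : ℝ) * t1 - a * t2 = K + 1 / 2) (hL : (g : ℝ) * t1 - h * t2 = L)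
    {e₁ e₂ : ℝ} {k : ℤ} (he : (b : ℝ) * e₁ - a * e₂ = k + 1 / 2) :
    mu3 a b n t1 t2 0 ≤ pairCost n g h e₁ e₂ := by
  set x := g * (t1 - e₁) - h * (t2 - e₂)
  have h1 : t1 - x * a = e₁ + ((h * (k - K) : ℤ) : ℝ) := by
    push_cast; linear_combination (e₁ - t1) * hgh - h * hK + h * he
  have h2 : t2 - x * b = e₂ + ((g * (k - K) : ℤ) : ℝ) := by
    push_cast; linear_combination (e₂ - t2) * hgh - g * hK + g * he
  have h3 : (0 : ℝ) - x * n = n * (g * e₁ - h * e₂) + ((-(n * L) : ℤ) : ℝ) := by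
    push_cast; linear_combination -n * hL
  refine (ciInf_le ⟨0, ?_⟩ x).trans ?_
  · rintro _ ⟨y, rfl⟩
    exact (dni_nonneg _).trans (le_max_left _ _)
  · rw [h1, h2, h3, dni_add_intCast, dni_add_intCast, dni_add_intCast]
    exact max_le_max (dni_le_abs _) (max_le_max (dni_le_abs _) le_rfl)

lemma pairCost_eq_lineCost (hgh : (a : ℝ) * g - b * h = 1) {c : ℤ}
    (hc : ((g : ℝ) + h) * n = S + 2 * (a + b) * c) (hab : (a : ℝ) + b ≠ 0) {e₁ e₂ : ℝ}
    (he : (b : ℝ) * e₁ - a * e₂ = 1 / 2) :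
    pairCost n g h e₁ e₂ =
      lineCost a b n S (g * e₁ - h * e₂ - (g + h) / (2 * (a + b))) := by
  have hε : 2 * ((a : ℝ) + b) * (1 / (2 * (a + b))) = 1 := by field_simp
  set ε := 1 / (2 * ((a : ℝ) + b))
  set u := g * e₁ - h * e₂ - (g + h) / (2 * (a + b)) with hu
  have h1 : ε + u * a = e₁ := by
    rw [hu]; linear_combination (e₁ - ε) * hgh + h * he - h / 2 * hε
  have h2 : ε - u * b = -e₂ := by
    rw [hu]; linear_combination (-(e₂ + ε)) * hgh - g * he + g / 2 * hε
  have h3 : S / (2 * ((a : ℝ) + b)) + u * n = n * (g * e₁ - h * e₂) + ((-c : ℤ) : ℝ) := by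
    rw [hu]; field_simp; push_cast; linear_combination -hc
  rw [lineCost, h1, h2, h3, dni_add_intCast, abs_neg]
  rfl

lemma mu3_le_lineCost (hgh : (a : ℝ) * g - b * h = 1) {K L c : ℤ}
    (hK : (b : ℝ) * t1 - a * t2 = K + 1 / 2) (hL : (g : ℝ) * t1 - h * t2 = L)
    (hc : ((g : ℝ) + h) * n = S + 2 * (a + b) * c) (hab : (a : ℝ) + b ≠ 0) (u : ℝ) :
    mu3 a b n t1 t2 0 ≤ lineCost a b n S u := by
  have he : (b : ℝ) * (1 / (2 * (a + b)) + u * a) - a * -(1 / (2 * (a + b)) - u * b) = 1 / 2 := by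
    field_simp; ring
  have hu : g * (1 / (2 * ((a : ℝ) + b)) + u * a) - h * -(1 / (2 * (a + b)) - u * b)
      - (g + h) / (2 * (a + b)) = u := by
    linear_combination u * hgh
  calc mu3 a b n t1 t2 0 ≤ pairCost n g h _ _ :=
        mu3_le_pairCost hgh hK hL (k := 0) (by rw [he, Int.cast_zero, zero_add])
    _ = lineCost a b n S u := by rw [pairCost_eq_lineCost hgh hc hab he, hu]

lemma lineInf_le_mu3 (hgh : (a : ℝ) * g - b * h = 1) {K L c : ℤ}
    (hK : (b : ℝ) * t1 - a * t2 = K + 1 / 2) (hL : (g : ℝ) * t1 - h * t2 = L)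
    (hc : ((g : ℝ) + h) * n = S + 2 * (a + b) * c) (hab : (0 : ℝ) < a + b)
    (h3 : lineInf a b n S ≤ 3 / (2 * (a + b))) :
    lineInf a b n S ≤ mu3 a b n t1 t2 0 := by
  refine le_ciInf fun x => ?_
  obtain ⟨e₁, e₂, k, he, hx⟩ := exists_pairCost_eq (n := n) hgh hK hL x
  rw [hx]
  by_contra! hlt
  have hk : |(k : ℝ) + 1 / 2| < 3 / 2 :=
    calc |(k : ℝ) + 1 / 2| = |(b : ℝ) * e₁ - a * e₂| := by rw [he]
      _ ≤ (a + b) * pairCost n g h e₁ e₂ := abs_sub_le_pairCost e₁ e₂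
      _ < (a + b) * (3 / (2 * (a + b))) := mul_lt_mul_of_pos_left (hlt.trans_le h3) hab
      _ = 3 / 2 := by field_simp
  obtain ⟨hk₁, hk₂⟩ := abs_lt.1 hk
  have hk' : k = 0 ∨ k = -1 := by
    have : -2 < k := by exact_mod_cast (by linarith : (-2 : ℝ) < k)
    have : k < 1 := by exact_mod_cast (by linarith : (k : ℝ) < 1)
    omega
  rcases hk' with rfl | rfl
  · rw [pairCost_eq_lineCost hgh hc hab.ne' (by rwa [Int.cast_zero, zero_add] at he)] at hlt
    exact hlt.not_ge (lineInf_le_lineCost _)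
  · rw [← pairCost_neg,
      pairCost_eq_lineCost hgh hc hab.ne' (by push_cast at he; linear_combination -he)] at hlt
    exact hlt.not_ge (lineInf_le_lineCost _)

lemma mu3_eq_lineInf (hgh : (a : ℝ) * g - b * h = 1) {K L c : ℤ}
    (hK : (b : ℝ) * t1 - a * t2 = K + 1 / 2) (hL : (g : ℝ) * t1 - h * t2 = L)
    (hc : ((g : ℝ) + h) * n = S + 2 * (a + b) * c) (hn : (0 : ℝ) < n) (hab : (0 : ℝ) < a + b)
    (hS0 : 0 ≤ S) (hSM : S ≤ 2 * (a + b)) (hna : (a : ℝ) * (a + b) ≤ n)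
    (hnb : (b : ℝ) * (a + b) ≤ n) :
    mu3 a b n t1 t2 0 = lineInf a b n S :=
  le_antisymm (le_ciInf (mu3_le_lineCost hgh hK hL hc hab.ne'))
    (lineInf_le_mu3 hgh hK hL hc hab
      (lineInf_le_three_div a.cast_nonneg b.cast_nonneg hn hab hS0 hSM hna hnb))

end Reduction

lemma exists_int_of_parity {a b : ℕ} {g h : ℤ} (hgh : a * g - b * h = 1)
    (hodd : Odd b → Even g) (heven : Even b → Even h) :
    (∃ K : ℤ, (b : ℝ) * (if Odd b then 1 / 2 else 0) - a * (if Odd b then 0 else 1 / 2)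
        = K + 1 / 2) ∧
      ∃ L : ℤ, (g : ℝ) * (if Odd b then 1 / 2 else 0) - h * (if Odd b then 0 else 1 / 2)
        = L := by
  by_cases hb : Odd b
  · simp only [hb, if_true]
    obtain ⟨i, hi⟩ := hodd hb
    obtain ⟨j, hj⟩ := hb
    exact ⟨⟨j, by rw [hj]; push_cast; ring⟩, i, by rw [hi]; push_cast; ring⟩
  · simp only [hb, if_false]
    obtain ⟨i, hi⟩ := heven (Nat.not_odd_iff_even.mp hb)
    obtain ⟨k, hk⟩ := Nat.not_odd_iff_even.mp hb
    have hag : (a : ℤ) * g = 2 * (k * h) + 1 := by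
      rw [show (a : ℤ) * g = 1 + b * h by omega, hk]; push_cast; ring
    obtain ⟨j, hj⟩ : Odd (a : ℤ) := (Int.odd_mul.mp ⟨k * h, hag⟩).1
    have hj' : (a : ℝ) = 2 * j + 1 := by exact_mod_cast hj
    exact ⟨⟨-j - 1, by rw [hj']; push_cast; ring⟩, -i, by rw [hi]; push_cast; ring⟩

lemma exists_mul_eq_add_of_emod_eq {a b n S : ℕ} {g h : ℤ}
    (hmod : ((g + h) * (n % (2 * a + 2 * b) : ℕ)) % (2 * (a : ℤ) + 2 * b) = S) :
    ∃ c : ℤ, ((g : ℝ) + h) * n = S + 2 * ((a : ℝ) + b) * c := by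
  push_cast at hmod
  have hz : (g + h) * (n : ℤ) = S + (2 * a + 2 * b) * ((g + h) * n / (2 * a + 2 * b)) := by
    rw [← hmod, show (g + h) * ((n : ℤ) % (2 * a + 2 * b)) % (2 * a + 2 * b)
      = (g + h) * n % (2 * a + 2 * b) by simp [Int.mul_emod]]
    exact (Int.emod_add_mul_ediv _ _).symm
  refine ⟨(g + h) * n / (2 * a + 2 * b), ?_⟩
  have := congrArg (Int.cast : ℤ → ℝ) hz
  push_cast at this
  linear_combination this

theorem stmt_19_general (a b : ℕ) (hab : a < b)
    (g h : ℤ) (hgh : a * g - b * h = 1)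
    (hodd : Odd b → Even g) (heven : Even b → Even h) :
    ∃ N : ℕ, ∀ n : ℕ, N ≤ n → b < n →
      ∀ t1 t2 : ℝ, t1 = (if Odd b then (1/2 : ℝ) else 0) →
        t2 = (if Odd b then (0 : ℝ) else 1/2) →
      ∀ S : ℕ, S < 2 * a + 2 * b →
        ((g + h) * (n % (2 * a + 2 * b) : ℕ)) % (2 * (a : ℤ) + 2 * b) = S →
        ((S = 0 ∨ S = 1 ∨ S = 2 * a + 2 * b - 1) →
          mu3 a b n t1 t2 0 = 1 / (2 * ((a : ℝ) + b))) ∧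
        (2 ≤ S → S ≤ 2 * a →
          mu3 a b n t1 t2 0 = ((n : ℝ) + b * S) / (2 * ((a : ℝ) + b) * (b + n))) ∧
        (2 * a < S → S ≤ 2 * a + 2 * b - 2 →
          mu3 a b n t1 t2 0 =
            ((n : ℝ) + 2 * a ^ 2 + 2 * a * b - a * S) / (2 * ((a : ℝ) + b) * (a + n))) := by
  refine ⟨b * (a + b), fun n hNn hbn t1 t2 ht1 ht2 S hSlt hmod => ?_⟩
  subst ht1 ht2
  obtain ⟨⟨K, hK⟩, L, hL⟩ := exists_int_of_parity hgh hodd heven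
  obtain ⟨c, hc⟩ := exists_mul_eq_add_of_emod_eq hmod
  have ha : (0 : ℝ) ≤ a := a.cast_nonneg
  have hab' : (a : ℝ) < b := by exact_mod_cast hab
  have hn : (0 : ℝ) < n := by exact_mod_cast (by omega : 0 < n)
  have hnb : (b : ℝ) * (a + b) ≤ n := by exact_mod_cast hNn
  have hSM : (S : ℝ) + 1 ≤ 2 * (a + b) := by exact_mod_cast (by omega : S + 1 ≤ 2 * (a + b))
  rw [mu3_eq_lineInf (by exact_mod_cast hgh) hK hL hc hn (by linarith) S.cast_nonneg
    (by linarith) (by nlinarith) hnb]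
  refine ⟨fun hS => ?_, fun hS2 hS2a => ?_, fun hS3 _ => ?_⟩
  · exact lineInf_eq_one_div ha b.cast_nonneg (by linarith)
      (by exact_mod_cast (by omega : S = 0 ∨ S = 1 ∨ S + 1 = 2 * (a + b)))
  · exact lineInf_eq_crossingValue ha hab'.le hn (by exact_mod_cast (by omega : 1 ≤ S))
      (by exact_mod_cast hS2a) (by nlinarith)
  · rw [lineInf_eq_crossingValue_swap ha b.cast_nonneg hn
      (by exact_mod_cast (by omega : 2 * a + 1 ≤ S)) hSM hnb, crossingValue]
    ring

theorem stmt_19 (a b : ℕ) (ha : 0 < a) (hab : a < b) (hcop : Nat.Coprime a b)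
    (g h : ℤ) (hgh : a * g - b * h = 1)
    (hodd : Odd b → Even g) (heven : Even b → Even h) :
    ∃ N : ℕ, ∀ n : ℕ, N ≤ n → b < n →
      ∀ t1 t2 : ℝ, t1 = (if Odd b then (1/2 : ℝ) else 0) →
        t2 = (if Odd b then (0 : ℝ) else 1/2) →
      ∀ S : ℕ, S < 2 * a + 2 * b →
        ((g + h) * (n % (2 * a + 2 * b) : ℕ)) % (2 * (a : ℤ) + 2 * b) = S →
        ((S = 0 ∨ S = 1 ∨ S = 2 * a + 2 * b - 1) →
          mu3 a b n t1 t2 0 = 1 / (2 * ((a : ℝ) + b))) ∧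
        (2 ≤ S → S ≤ 2 * a →
          mu3 a b n t1 t2 0 = ((n : ℝ) + b * S) / (2 * ((a : ℝ) + b) * (b + n))) ∧
        (2 * a < S → S ≤ 2 * a + 2 * b - 2 →
          mu3 a b n t1 t2 0 =
            ((n : ℝ) + 2 * a ^ 2 + 2 * a * b - a * S) / (2 * ((a : ℝ) + b) * (a + n))) :=
  stmt_19_general a b hab g h hgh hodd heven
end
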